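/- Let ρ₀ > 0 and α, β ∈ (−π/2, π/2). The function ρ ↦ k_ℍ(ρ·e^{iα}, ρ₀·e^{iβ}) on (0,∞) attains its minimum at ρ = ρ₀, is increasing for ρ > ρ₀ and decreasing for ρ < ρ₀. -/

import Mathlib

open Complex Set Real

/-- The hyperbolic (Poincaré) distance on the right half-plane
`ℍ = {z : 0 < Re z}`, given by the explicit formula
`k_ℍ(z,w) = (1/2)·log((1+|(z−w)/(z+conj w)|)/(1−|(z−w)/(z+conj w)|))`. -/
noncomputable def kH (z w : ℂ) : ℝ :=
  Real.log ((1 + ‖(z - w) / (z + (starRingEnd ℂ) w)‖) /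
    (1 - ‖(z - w) / (z + (starRingEnd ℂ) w)‖)) / 2

/-!
Writing `q = (z - w) / (z + conj w)`, one has `kH z w = artanh ‖q‖` and
`1 - ‖q‖² = 4 Re z Re w / ‖z + conj w‖²`. Along a ray `z = ρ u` with `‖u‖ = 1` this becomes
`4 Re u Re w / (ρ + ‖w‖² / ρ + 2 Re (u w))`, so `kH (ρ u) w` is a strictly increasing function of
`ρ + ‖w‖² / ρ`, which decreases on `(0, ‖w‖]` and increases on `[‖w‖, ∞)`.
-/

open ComplexConjugate

namespace Complex

lemma normSq_add_conj_sub_normSq_sub (z w : ℂ) :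
    normSq (z + conj w) - normSq (z - w) = 4 * z.re * w.re := by
  simp only [normSq_apply, add_re, add_im, sub_re, sub_im, conj_re, conj_im]
  ring

lemma one_sub_norm_div_add_conj_sq {z w : ℂ} (h : z + conj w ≠ 0) :
    1 - ‖(z - w) / (z + conj w)‖ ^ 2 = 4 * z.re * w.re / normSq (z + conj w) := by
  have hpos := normSq_pos.2 h
  rw [norm_div, div_pow, ← normSq_eq_norm_sq, ← normSq_eq_norm_sq, eq_div_iff hpos.ne',
    sub_mul, div_mul_cancel₀ _ hpos.ne', ← normSq_add_conj_sub_normSq_sub]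
  ring

lemma add_conj_ne_zero {z w : ℂ} (hz : 0 < z.re) (hw : 0 < w.re) : z + conj w ≠ 0 := by
  intro h
  have := congrArg re h
  simp only [add_re, conj_re, zero_re] at this
  linarith

lemma norm_div_add_conj_lt_one {z w : ℂ} (hz : 0 < z.re) (hw : 0 < w.re) :
    ‖(z - w) / (z + conj w)‖ < 1 := by
  have h := one_sub_norm_div_add_conj_sq (add_conj_ne_zero hz hw)
  have : 0 < 4 * z.re * w.re / normSq (z + conj w) :=
    div_pos (by positivity) (normSq_pos.2 (add_conj_ne_zero hz hw))
  nlinarith [norm_nonneg ((z - w) / (z + conj w))]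

lemma normSq_ofReal_mul_add_conj_div {u : ℂ} (hu : ‖u‖ = 1) (w : ℂ) {ρ : ℝ} (hρ : ρ ≠ 0) :
    normSq (ρ * u + conj w) / ρ = ρ + ‖w‖ ^ 2 / ρ + 2 * (u * w).re := by
  rw [normSq_add, normSq_mul, normSq_ofReal, normSq_conj, normSq_eq_norm_sq u, hu,
    normSq_eq_norm_sq w, conj_conj]
  field_simp
  simp only [mul_re, mul_im, ofReal_re, ofReal_im]
  ring

lemma one_sub_norm_div_add_conj_sq_ofReal_mul {u w : ℂ} (hu : ‖u‖ = 1) (hu' : 0 < u.re)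
    (hw : 0 < w.re) {ρ : ℝ} (hρ : 0 < ρ) :
    1 - ‖(ρ * u - w) / (ρ * u + conj w)‖ ^ 2 =
      4 * u.re * w.re / (ρ + ‖w‖ ^ 2 / ρ + 2 * (u * w).re) := by
  have hz : 0 < (ρ * u).re := by simpa using mul_pos hρ hu'
  rw [one_sub_norm_div_add_conj_sq (add_conj_ne_zero hz hw),
    ← normSq_ofReal_mul_add_conj_div hu w hρ.ne', re_ofReal_mul]
  field_simp

end Complex

lemma kH_eq_artanh {z w : ℂ} (hz : 0 < z.re) (hw : 0 < w.re) :
    kH z w = artanh ‖(z - w) / (z + conj w)‖ := by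
  rw [artanh_eq_half_log, kH, one_div_mul_eq_div]
  exact ⟨by linarith [norm_nonneg ((z - w) / (z + conj w))], (norm_div_add_conj_lt_one hz hw).le⟩

lemma kH_ofReal_mul_lt_kH_ofReal_mul {u w : ℂ} (hu : ‖u‖ = 1) (hu' : 0 < u.re) (hw : 0 < w.re)
    {ρ₁ ρ₂ : ℝ} (h₁ : 0 < ρ₁) (h₂ : 0 < ρ₂) (h : ρ₁ + ‖w‖ ^ 2 / ρ₁ < ρ₂ + ‖w‖ ^ 2 / ρ₂) :
    kH (ρ₁ * u) w < kH (ρ₂ * u) w := by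
  have hz : ∀ {ρ : ℝ}, 0 < ρ → 0 < (ρ * u).re := fun hρ => by simpa using mul_pos hρ hu'
  have hden : 0 < ρ₁ + ‖w‖ ^ 2 / ρ₁ + 2 * (u * w).re := by
    rw [← normSq_ofReal_mul_add_conj_div hu w h₁.ne']
    exact div_pos (normSq_pos.2 (add_conj_ne_zero (hz h₁) hw)) h₁
  have hsq : ‖(ρ₁ * u - w) / (ρ₁ * u + conj w)‖ ^ 2 < ‖(ρ₂ * u - w) / (ρ₂ * u + conj w)‖ ^ 2 := by
    have hlt := div_lt_div_of_pos_left (by positivity : 0 < 4 * u.re * w.re) hden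
      (by linarith : ρ₁ + ‖w‖ ^ 2 / ρ₁ + 2 * (u * w).re < ρ₂ + ‖w‖ ^ 2 / ρ₂ + 2 * (u * w).re)
    rw [← one_sub_norm_div_add_conj_sq_ofReal_mul hu hu' hw h₁,
      ← one_sub_norm_div_add_conj_sq_ofReal_mul hu hu' hw h₂] at hlt
    linarith
  rw [kH_eq_artanh (hz h₁) hw, kH_eq_artanh (hz h₂) hw]
  exact artanh_lt_artanh (by linarith [norm_nonneg ((ρ₁ * u - w) / (ρ₁ * u + conj w))])
    (norm_div_add_conj_lt_one (hz h₂) hw) (pow_lt_pow_iff_left₀ (norm_nonneg _) (norm_nonneg _)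
      two_ne_zero |>.1 hsq)

lemma add_sq_div_lt_add_sq_div {c x y : ℝ} (hx : 0 < x) (hy : 0 < y)
    (h : 0 < (y - x) * (x * y - c ^ 2)) :
    x + c ^ 2 / x < y + c ^ 2 / y := by
  have key : y + c ^ 2 / y - (x + c ^ 2 / x) = (y - x) * (x * y - c ^ 2) / (x * y) := by
    field_simp
    ring
  have : 0 < (y - x) * (x * y - c ^ 2) / (x * y) := by positivity
  linarith

lemma strictMonoOn_add_sq_div {c : ℝ} (hc : 0 < c) :
    StrictMonoOn (fun ρ : ℝ => ρ + c ^ 2 / ρ) (Ici c) := by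
  intro x hx y hy hxy
  have : c ^ 2 < x * y := by nlinarith [mem_Ici.1 hx, mem_Ici.1 hy]
  exact add_sq_div_lt_add_sq_div (hc.trans_le hx) (hc.trans_le hy) (by nlinarith)

lemma strictAntiOn_add_sq_div {c : ℝ} :
    StrictAntiOn (fun ρ : ℝ => ρ + c ^ 2 / ρ) (Ioc 0 c) := by
  intro x hx y hy hxy
  have : x * y < c ^ 2 := by nlinarith [hx.1, hy.2]
  exact add_sq_div_lt_add_sq_div hy.1 hx.1 (by nlinarith)

theorem stmt_3 (ρ₀ α β : ℝ) (hρ₀ : 0 < ρ₀)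
    (hα : α ∈ Set.Ioo (-(π/2)) (π/2)) (hβ : β ∈ Set.Ioo (-(π/2)) (π/2)) :
    (∀ ρ ∈ Set.Ioi (0:ℝ),
        kH ((ρ₀ : ℂ) * Complex.exp (α * Complex.I)) ((ρ₀ : ℂ) * Complex.exp (β * Complex.I)) ≤
          kH ((ρ : ℂ) * Complex.exp (α * Complex.I)) ((ρ₀ : ℂ) * Complex.exp (β * Complex.I))) ∧
    StrictMonoOn
      (fun ρ : ℝ => kH ((ρ : ℂ) * Complex.exp (α * Complex.I))
        ((ρ₀ : ℂ) * Complex.exp (β * Complex.I))) (Set.Ici ρ₀) ∧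
    StrictAntiOn
      (fun ρ : ℝ => kH ((ρ : ℂ) * Complex.exp (α * Complex.I))
        ((ρ₀ : ℂ) * Complex.exp (β * Complex.I))) (Set.Ioc (0:ℝ) ρ₀) := by
  have hu : ‖Complex.exp (α * I)‖ = 1 := norm_exp_ofReal_mul_I α
  have hu' : 0 < (Complex.exp (α * I)).re := by
    rw [exp_ofReal_mul_I_re]; exact cos_pos_of_mem_Ioo hα
  have hw : 0 < ((ρ₀ : ℂ) * Complex.exp (β * I)).re := by
    rw [re_ofReal_mul, exp_ofReal_mul_I_re]; exact mul_pos hρ₀ (cos_pos_of_mem_Ioo hβ)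
  have hwn : ‖(ρ₀ : ℂ) * Complex.exp (β * I)‖ = ρ₀ := by
    rw [norm_mul, norm_exp_ofReal_mul_I, mul_one, norm_real, Real.norm_of_nonneg hρ₀.le]
  have mono : StrictMonoOn (fun ρ : ℝ => kH (ρ * Complex.exp (α * I)) (ρ₀ * Complex.exp (β * I)))
      (Ici ρ₀) := fun x hx y hy hxy =>
    kH_ofReal_mul_lt_kH_ofReal_mul hu hu' hw (hρ₀.trans_le hx) (hρ₀.trans_le hy)
      (by rw [hwn]; exact strictMonoOn_add_sq_div hρ₀ hx hy hxy)
  have anti : StrictAntiOn (fun ρ : ℝ => kH (ρ * Complex.exp (α * I)) (ρ₀ * Complex.exp (β * I)))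
      (Ioc 0 ρ₀) := fun x hx y hy hxy =>
    kH_ofReal_mul_lt_kH_ofReal_mul hu hu' hw hy.1 hx.1
      (by rw [hwn]; exact strictAntiOn_add_sq_div hx hy hxy)
  refine ⟨fun ρ hρ => ?_, mono, anti⟩
  rcases le_total ρ₀ ρ with h | h
  · exact mono.monotoneOn self_mem_Ici h h
  · exact anti.antitoneOn ⟨hρ, h⟩ ⟨hρ₀, le_rfl⟩ h
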